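/- Let q ≥ 2 be even and m ≥ 2. The cardinality of D_m := {(r_1,...,r_{m−1}) ∈ {0, q/2, q}^{m−1} : r_k ≤ kq − 2(r_1+...+r_{k−1}) for 2 ≤ k ≤ m−1, and 2(r_1+...+r_{m−1}) = mq} equals the Riordan number R_m (the number of non-crossing partitions of [m] with no singletons), and in particular |D_m| is independent of the even integer q ≥ 2. -/

import Mathlib

open Finset

/-- A finite partition of `{0, ..., m-1}` is non-crossing if one cannot find
`p₁ < q₁ < p₂ < q₂` with `p₁, p₂` in one block and `q₁, q₂` in a different block. -/
def IsNoncrossing {m : ℕ} (P : Finpartition (Finset.univ : Finset (Fin m))) : Prop :=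
  ¬ ∃ p₁ q₁ p₂ q₂ : Fin m, p₁ < q₁ ∧ q₁ < p₂ ∧ p₂ < q₂ ∧
    ∃ b ∈ P.parts, ∃ b' ∈ P.parts, b ≠ b' ∧ p₁ ∈ b ∧ p₂ ∈ b ∧ q₁ ∈ b' ∧ q₂ ∈ b'

/-- A partition has no singletons if every block has size at least 2. -/
def NoSingletons {m : ℕ} (P : Finpartition (Finset.univ : Finset (Fin m))) : Prop :=
  ∀ b ∈ P.parts, 2 ≤ b.card

/-- The `m`-th Riordan number. -/
noncomputable def riordan (m : ℕ) : ℕ :=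
  Nat.card {P : Finpartition (Finset.univ : Finset (Fin m)) // IsNoncrossing P ∧ NoSingletons P}

/-- `riordanBlocks m j = R_{m,j}`: the number of non-crossing partitions of `[m]`
with exactly `j` blocks and no singletons. -/
noncomputable def riordanBlocks (m j : ℕ) : ℕ :=
  Nat.card {P : Finpartition (Finset.univ : Finset (Fin m)) //
    IsNoncrossing P ∧ NoSingletons P ∧ P.parts.card = j}

/-- `r ∈ A_m`: admissible contraction patterns for `I(f)^m` (here `r i` is `r_{i+1}`,
`i = 0, ..., m-2`): each `r_k ∈ {0, ..., q}` and `r_k + 2(r_1 + ⋯ + r_{k-1}) ≤ k q`. -/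
def memA (q m : ℕ) (r : Fin (m - 1) → ℕ) : Prop :=
  (∀ i, r i ≤ q) ∧
    ∀ i : Fin (m - 1),
      r i + 2 * ∑ j ∈ Finset.univ.filter (fun j => j < i), r j ≤ ((i : ℕ) + 1) * q

/-- `r ∈ B_m`: patterns in `A_m` with total contraction `2(r_1 + ⋯ + r_{m-1}) = m q`. -/
def memB (q m : ℕ) (r : Fin (m - 1) → ℕ) : Prop :=
  memA q m r ∧ 2 * ∑ i, r i = m * q

/-- `r ∈ D_m`: patterns in `B_m` with all entries in `{0, q/2, q}`. -/
def memD (q m : ℕ) (r : Fin (m - 1) → ℕ) : Prop :=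
  memB q m r ∧ ∀ i, r i = 0 ∨ r i = q / 2 ∨ r i = q

/-!
Dividing every entry by `q / 2` identifies `D_m` with a set of patterns in `{0, 1, 2}^{m-1}`.
Prefixing a `0` and reading `0, 1, 2` as up, flat and down steps, these patterns are exactly the
Riordan paths of length `m`: Motzkin paths from height `0` back to `0` without flat steps at
height `0` (the constraint on `r_k` says that step `k` starts high enough).

Riordan paths are in bijection with non-crossing partitions of `[m]` without singletons. An up
step opens a block; a flat or down step at height `h` extends, resp. closes, the block opened by
the last up step from height `h - 1`. Between the opener of a block and its later elements the
path stays at least at the height of the block, which forbids crossings; every opener is matched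
by a closer, which forbids singletons. Conversely a partition goes up at the first element of
each block, down at its last and flat elsewhere; the height before position `i` is then the
number of blocks straddling `i`, and non-crossing-ness lets the heights recover the blocks.
-/

theorem Finpartition.eq_of_part_eq {α : Type*} [DecidableEq α] {s : Finset α}
    {P Q : Finpartition s} (h : ∀ a ∈ s, P.part a = Q.part a) : P = Q := by
  suffices hsub : ∀ {P Q : Finpartition s}, (∀ a ∈ s, P.part a = Q.part a) →
      P.parts ⊆ Q.parts from
    Finpartition.ext ((hsub h).antisymm (hsub fun a ha => (h a ha).symm))
  intro P Q h b hb
  obtain ⟨a, ha⟩ := P.nonempty_of_mem_parts hb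
  have has : a ∈ s := P.le hb ha
  rw [← P.part_eq_of_mem hb ha, h a has]
  exact Q.part_mem.2 has

namespace Riordan

theorem memD_two_mul_iff {p m : ℕ} (hp : 0 < p) (s : Fin (m - 1) → ℕ) :
    memD (2 * p) m (fun i => p * s i) ↔ memD 2 m s := by
  have hdiv : 2 * p / 2 = p := by omega
  have hle : ∀ {a b : ℕ}, p * a ≤ p * b ↔ a ≤ b := Nat.mul_le_mul_left_iff hp
  have heq : ∀ {a b : ℕ}, p * a = p * b ↔ a = b := Nat.mul_left_cancel_iff hp
  simp only [memD, memB, memA, hdiv, ← Finset.mul_sum]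
  refine and_congr (and_congr (and_congr (forall_congr' fun i => ?_) (forall_congr' fun i => ?_))
    ?_) (forall_congr' fun i => ?_)
  · convert hle using 2; ring
  · convert hle using 2 <;> ring
  · convert heq using 2 <;> ring
  · have htwo : p * s i = 2 * p ↔ s i = 2 := by rw [mul_comm 2 p]; exact heq
    rw [Nat.mul_eq_zero, or_iff_right hp.ne', mul_eq_left₀ hp.ne', htwo]
    rfl

theorem dvd_of_memD_two_mul {p m : ℕ} {r : Fin (m - 1) → ℕ} (hr : memD (2 * p) m r)
    (i : Fin (m - 1)) : p ∣ r i := by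
  rcases hr.2 i with h | h | h <;> rw [h] <;> simp

theorem card_memD_two_mul {p : ℕ} (hp : 0 < p) (m : ℕ) :
    Nat.card {r : Fin (m - 1) → ℕ // memD (2 * p) m r} =
      Nat.card {s : Fin (m - 1) → ℕ // memD 2 m s} :=
  Nat.card_congr
    { toFun r := ⟨fun i => r.1 i / p, (memD_two_mul_iff hp _).1 <| by
        convert r.2 using 2 with i
        exact Nat.mul_div_cancel' (dvd_of_memD_two_mul r.2 i)⟩
      invFun s := ⟨fun i => p * s.1 i, (memD_two_mul_iff hp _).2 s.2⟩
      left_inv r := Subtype.ext <| funext fun i => Nat.mul_div_cancel' (dvd_of_memD_two_mul r.2 i)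
      right_inv s := Subtype.ext <| funext fun i => Nat.mul_div_cancel_left _ hp }

/-- `w j = 0, 1, 2` encodes an up, flat, down step. -/
def height (w : ℕ → ℕ) (k : ℕ) : ℤ := k - ∑ j ∈ range k, (w j : ℤ)

structure IsRiordanPath (m : ℕ) (w : ℕ → ℕ) : Prop where
  step_le_two : ∀ k < m, w k ≤ 2
  step_le_height : ∀ k < m, (w k : ℤ) ≤ 2 * height w k
  height_length : height w m = 0

def blockHeight (w : ℕ → ℕ) (e : ℕ) : ℤ := max (height w e) (height w (e + 1))

def opener (w : ℕ → ℕ) (e : ℕ) : ℕ :=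
  Nat.findGreatest (fun j => height w j < blockHeight w e) e

@[simp] theorem height_zero (w : ℕ → ℕ) : height w 0 = 0 := by simp [height]

theorem height_succ (w : ℕ → ℕ) (k : ℕ) : height w (k + 1) = height w k + 1 - w k := by
  simp only [height, sum_range_succ]
  push_cast
  ring

variable {m : ℕ} {w : ℕ → ℕ}

theorem IsRiordanPath.height_nonneg (hw : IsRiordanPath m w) {k : ℕ} (hk : k ≤ m) :
    0 ≤ height w k := by
  induction k with
  | zero => simp
  | succ k ih =>
    have := hw.step_le_height k hk
    have := hw.step_le_two k hk
    have := ih (by omega)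
    rw [height_succ]
    omega

theorem IsRiordanPath.step_zero (hw : IsRiordanPath m w) (hm : 0 < m) : w 0 = 0 := by
  simpa using hw.step_le_height 0 hm

theorem IsRiordanPath.one_le_blockHeight (hw : IsRiordanPath m w) {e : ℕ} (he : e < m) :
    1 ≤ blockHeight w e := by
  have := hw.step_le_height e he
  have := hw.height_nonneg he.le
  rw [blockHeight, height_succ]
  omega

theorem opener_le (w : ℕ → ℕ) (e : ℕ) : opener w e ≤ e := Nat.findGreatest_le e

theorem le_height_of_opener_lt {e i : ℕ} (h₁ : opener w e < i) (h₂ : i ≤ e) :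
    blockHeight w e ≤ height w i :=
  le_of_not_gt (Nat.findGreatest_is_greatest h₁ h₂)

theorem opener_eq_of_height {e k : ℕ} (hke : k ≤ e) (hk : height w k < blockHeight w e)
    (hbetween : ∀ i, k < i → i ≤ e → blockHeight w e ≤ height w i) : opener w e = k :=
  Nat.findGreatest_eq_iff.2 ⟨hke, fun _ => hk, fun i h₁ h₂ => not_lt.2 (hbetween i h₁ h₂)⟩

theorem opener_eq_self_of_step_eq_zero {e : ℕ} (he : w e = 0) : opener w e = e := by
  refine Nat.findGreatest_eq ?_
  rw [blockHeight, height_succ, he]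
  omega

theorem IsRiordanPath.height_opener_lt (hw : IsRiordanPath m w) {e : ℕ} (he : e < m) :
    height w (opener w e) < blockHeight w e := by
  refine Nat.findGreatest_spec (P := fun j => height w j < blockHeight w e) (Nat.zero_le e) ?_
  have := hw.one_le_blockHeight he
  simp only [height_zero]
  omega

theorem IsRiordanPath.height_opener_succ (hw : IsRiordanPath m w) {e : ℕ} (he : e < m) :
    height w (opener w e + 1) = blockHeight w e := by
  have hlt := hw.height_opener_lt he
  have hstep := height_succ w (opener w e)
  rcases (opener_le w e).eq_or_lt with heq | hlt'
  · rw [heq, blockHeight] at hlt ⊢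
    omega
  · have := le_height_of_opener_lt (Nat.lt_add_one _) hlt'
    omega

theorem IsRiordanPath.step_opener (hw : IsRiordanPath m w) {e : ℕ} (he : e < m) :
    w (opener w e) = 0 := by
  have := hw.height_opener_lt he
  have := hw.height_opener_succ he
  rw [height_succ] at this
  omega

theorem IsRiordanPath.opener_opener (hw : IsRiordanPath m w) {e : ℕ} (he : e < m) :
    opener w (opener w e) = opener w e :=
  opener_eq_self_of_step_eq_zero (hw.step_opener he)

theorem IsRiordanPath.opener_eq_self_iff (hw : IsRiordanPath m w) {e : ℕ} (he : e < m) :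
    opener w e = e ↔ w e = 0 :=
  ⟨fun h => h ▸ hw.step_opener he, opener_eq_self_of_step_eq_zero⟩

theorem IsRiordanPath.blockHeight_eq_of_opener_eq (hw : IsRiordanPath m w) {x y : ℕ}
    (hx : x < m) (hy : y < m) (h : opener w x = opener w y) :
    blockHeight w x = blockHeight w y := by
  rw [← hw.height_opener_succ hx, ← hw.height_opener_succ hy, h]

theorem IsRiordanPath.le_of_opener_eq (hw : IsRiordanPath m w) {x y : ℕ} (hx : x < m)
    (hy : y < m) (hwx : w x = 2) (h : opener w y = opener w x) : y ≤ x := by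
  by_contra! hxy
  have hdown := height_succ w x
  have hbx : height w x ≤ blockHeight w x := le_max_left _ _
  have hby := hw.blockHeight_eq_of_opener_eq hy hx h
  have := le_height_of_opener_lt (w := w) (e := y) (i := x + 1)
    (by have := opener_le w x; omega) hxy
  rw [hwx] at hdown
  omega

theorem IsRiordanPath.exists_closer (hw : IsRiordanPath m w) {k : ℕ} (hk : k < m)
    (hwk : w k = 0) : ∃ x, k < x ∧ x < m ∧ w x = 2 ∧ opener w x = k := by
  classical
  have hend : height w m ≤ height w k := hw.height_length ▸ hw.height_nonneg hk.le
  have hex : ∃ t, k < t ∧ height w t ≤ height w k := ⟨m, hk, hend⟩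
  obtain ⟨t, ⟨hkt, hreturn⟩, hfirst⟩ : ∃ t, (k < t ∧ height w t ≤ height w k) ∧
      ∀ i < t, ¬(k < i ∧ height w i ≤ height w k) :=
    ⟨Nat.find hex, Nat.find_spec hex, fun _ => Nat.find_min hex⟩
  have htm : t ≤ m := not_lt.1 fun h => hfirst m h ⟨hk, hend⟩
  have habove : ∀ i, k < i → i < t → height w k < height w i := fun i h₁ h₂ =>
    lt_of_not_ge fun h => hfirst i h₂ ⟨h₁, h⟩
  have hup : height w (k + 1) = height w k + 1 := by rw [height_succ, hwk]; simp
  obtain ⟨x, rfl⟩ : ∃ x, t = x + 1 := ⟨t - 1, by omega⟩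
  have hkx : k < x := by
    by_contra! h
    obtain rfl : x = k := by omega
    omega
  have hxk := habove x hkx (by omega)
  have hdown := height_succ w x
  have := hw.step_le_two x (by omega)
  have hwx : w x = 2 := by omega
  have hbx : blockHeight w x = height w x := max_eq_left (by omega)
  refine ⟨x, hkx, by omega, hwx, opener_eq_of_height hkx.le (by omega) fun i h₁ h₂ => ?_⟩
  rcases h₂.eq_or_lt with rfl | h₂
  · exact hbx.le
  · have := habove i h₁ (by omega)
    omega

theorem IsRiordanPath.opener_eq_of_interlaced (hw : IsRiordanPath m w) {p₁ q₁ p₂ q₂ : ℕ}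
    (h₁ : p₁ < q₁) (h₂ : q₁ < p₂) (h₃ : p₂ < q₂) (hq₂ : q₂ < m)
    (hp : opener w p₁ = opener w p₂) (hq : opener w q₁ = opener w q₂) :
    opener w p₁ = opener w q₁ := by
  have hBp := hw.blockHeight_eq_of_opener_eq (by omega) (by omega) hp
  have hBq := hw.blockHeight_eq_of_opener_eq (by omega) (by omega) hq
  have hkp := hw.height_opener_lt (e := p₁) (by omega)
  have hkq := hw.height_opener_lt (e := q₁) (by omega)
  have := opener_le w p₁
  have := opener_le w q₁
  by_contra hne
  rcases Nat.lt_or_gt_of_ne hne with hlt | hlt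
  · have := le_height_of_opener_lt (w := w) (e := p₂) (hp ▸ hlt) (by omega)
    have := le_height_of_opener_lt (w := w) (e := q₂) (i := p₂) (by omega) h₃.le
    have : height w p₂ ≤ blockHeight w p₂ := le_max_left _ _
    omega
  · have := le_height_of_opener_lt (w := w) (e := q₂) (hq ▸ hlt) (by omega)
    have := le_height_of_opener_lt (w := w) (e := p₂) (i := q₁) (by omega) h₂.le
    have : height w q₁ ≤ blockHeight w q₁ := le_max_left _ _
    omega

open Classical in
noncomputable def pathPartition (m : ℕ) (w : ℕ → ℕ) : Finpartition (univ : Finset (Fin m)) :=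
  Finpartition.ofSetoid (Setoid.ker fun x : Fin m => opener w x)

open Classical in
theorem mem_part_pathPartition {x y : Fin m} :
    y ∈ (pathPartition m w).part x ↔ opener w x = opener w y :=
  Finpartition.mem_part_ofSetoid_iff_rel

theorem IsRiordanPath.isNoncrossing_pathPartition (hw : IsRiordanPath m w) :
    IsNoncrossing (pathPartition m w) := by
  rintro ⟨p₁, q₁, p₂, q₂, h₁, h₂, h₃, b, hb, b', hb', hne, hp₁, hp₂, hq₁, hq₂⟩
  rw [← (pathPartition m w).part_eq_of_mem hb hp₁] at hp₂ hne
  rw [← (pathPartition m w).part_eq_of_mem hb' hq₁] at hq₂ hne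
  rw [mem_part_pathPartition] at hp₂ hq₂
  refine hne (Finpartition.part_eq_of_mem _ (Finpartition.part_mem _ |>.2 (mem_univ _)) ?_)
  rw [mem_part_pathPartition]
  exact (hw.opener_eq_of_interlaced h₁ h₂ h₃ q₂.isLt hp₂ hq₂).symm

theorem IsRiordanPath.noSingletons_pathPartition (hw : IsRiordanPath m w) :
    NoSingletons (pathPartition m w) := by
  intro b hb
  obtain ⟨x, hx⟩ := Finpartition.nonempty_of_mem_parts _ hb
  rw [← (pathPartition m w).part_eq_of_mem hb hx]
  have hk : opener w x < m := (opener_le w x).trans_lt x.isLt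
  obtain ⟨c, hkc, hcm, -, hc⟩ := hw.exists_closer hk (hw.step_opener x.isLt)
  refine Finset.one_lt_card.2 ⟨⟨opener w x, hk⟩, ?_, ⟨c, hcm⟩, ?_, fun h => ?_⟩
  · rw [mem_part_pathPartition, hw.opener_opener x.isLt]
  · rw [mem_part_pathPartition, hc]
  · exact hkc.ne (congrArg Fin.val h)

section PartitionPath

variable (P : Finpartition (univ : Finset (Fin m)))

def IsBlockMin (x : Fin m) : Prop := ∀ y ∈ P.part x, x ≤ y

def IsBlockMax (x : Fin m) : Prop := ∀ y ∈ P.part x, y ≤ x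

instance : DecidablePred (IsBlockMin P) := fun x =>
  inferInstanceAs (Decidable (∀ y ∈ P.part x, x ≤ y))

instance : DecidablePred (IsBlockMax P) := fun x =>
  inferInstanceAs (Decidable (∀ y ∈ P.part x, y ≤ x))

noncomputable def stepType (x : Fin m) : ℕ :=
  (if IsBlockMin P x then 0 else 1) + (if IsBlockMax P x then 1 else 0)

noncomputable def partitionPath : ℕ → ℕ := fun k => if h : k < m then stepType P ⟨k, h⟩ else 0

def openBlocks (i : ℕ) : Finset (Finset (Fin m)) :=
  P.parts.filter fun b => (∃ y ∈ b, (y : ℕ) < i) ∧ ∃ y ∈ b, i ≤ (y : ℕ)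

theorem partitionPath_of_lt {k : ℕ} (hk : k < m) : partitionPath P k = stepType P ⟨k, hk⟩ :=
  dif_pos hk

theorem part_mem_openBlocks_iff (x : Fin m) :
    P.part x ∈ openBlocks P x ↔ ¬IsBlockMin P x := by
  have hx : ∃ y ∈ P.part x, (x : ℕ) ≤ y := ⟨x, P.mem_part (mem_univ x), le_rfl⟩
  simp only [openBlocks, mem_filter, P.part_mem.2 (mem_univ x), hx, IsBlockMin, Fin.le_def,
    true_and, and_true]
  push Not
  rfl

theorem part_mem_openBlocks_succ_iff (x : Fin m) :
    P.part x ∈ openBlocks P (x + 1) ↔ ¬IsBlockMax P x := by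
  have hx : ∃ y ∈ P.part x, (y : ℕ) < x + 1 := ⟨x, P.mem_part (mem_univ x), Nat.lt_add_one _⟩
  simp only [openBlocks, mem_filter, P.part_mem.2 (mem_univ x), hx, IsBlockMax, Fin.le_def,
    Nat.add_one_le_iff, true_and]
  push Not
  rfl

theorem card_openBlocks_succ (x : Fin m) :
    #(openBlocks P (x + 1)) + (if IsBlockMin P x then 0 else 1) =
      #(openBlocks P x) + (if IsBlockMax P x then 0 else 1) := by
  have herase : (openBlocks P (x + 1)).erase (P.part x) = (openBlocks P x).erase (P.part x) := by
    ext b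
    simp only [openBlocks, mem_erase, mem_filter]
    refine and_congr_right fun hbx => and_congr_right fun hb => ?_
    have hne : ∀ y ∈ b, (y : ℕ) ≠ x := fun y hy hyx =>
      hbx (P.part_eq_of_mem hb (Fin.ext hyx ▸ hy)).symm
    constructor
    · rintro ⟨⟨y, hy, hyx⟩, ⟨z, hz, hxz⟩⟩
      exact ⟨⟨y, hy, by have := hne y hy; omega⟩, ⟨z, hz, by omega⟩⟩
    · rintro ⟨⟨y, hy, hyx⟩, ⟨z, hz, hxz⟩⟩
      exact ⟨⟨y, hy, by omega⟩, ⟨z, hz, by have := hne z hz; omega⟩⟩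
  have hcard : ∀ s : Finset (Finset (Fin m)),
      #s = #(s.erase (P.part x)) + if P.part x ∈ s then 1 else 0 := by
    intro s
    split_ifs with h
    · exact (card_erase_add_one h).symm
    · rw [erase_eq_of_notMem h, add_zero]
  rw [hcard (openBlocks P (x + 1)), hcard (openBlocks P x), herase]
  simp only [part_mem_openBlocks_succ_iff, part_mem_openBlocks_iff]
  split_ifs <;> omega

theorem height_partitionPath {i : ℕ} (hi : i ≤ m) :
    height (partitionPath P) i = #(openBlocks P i) := by
  induction i with
  | zero => simp [openBlocks]
  | succ i ih =>
    have hcard := card_openBlocks_succ P ⟨i, hi⟩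
    dsimp only at hcard
    rw [height_succ, ih (by omega), partitionPath_of_lt P hi, stepType]
    split_ifs at hcard ⊢ <;> push_cast <;> omega

variable {P}

theorem not_isBlockMax_of_isBlockMin (hP : NoSingletons P) {x : Fin m} (hx : IsBlockMin P x) :
    ¬IsBlockMax P x := fun hx' => by
  obtain ⟨y, hy, hyx⟩ := Finset.exists_mem_ne (hP _ (P.part_mem.2 (mem_univ x))) x
  exact hyx (le_antisymm (hx' y hy) (hx y hy))

theorem isRiordanPath_partitionPath (hP : NoSingletons P) :
    IsRiordanPath m (partitionPath P) where
  step_le_two k hk := by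
    rw [partitionPath_of_lt P hk, stepType]
    split_ifs <;> omega
  step_le_height k hk := by
    rw [partitionPath_of_lt P hk, height_partitionPath P hk.le]
    by_cases hmin : IsBlockMin P ⟨k, hk⟩
    · simp [stepType, hmin, not_isBlockMax_of_isBlockMin hP hmin]
    · have hopen := (part_mem_openBlocks_iff P ⟨k, hk⟩).2 hmin
      have : 0 < #(openBlocks P k) := card_pos.2 ⟨_, hopen⟩
      rw [stepType]
      split_ifs <;> omega
  height_length := by
    rw [height_partitionPath P le_rfl, Nat.cast_eq_zero, card_eq_zero]
    exact filter_false_of_mem fun b _ ⟨_, y, _, hy⟩ => (y.isLt.trans_le hy).false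

theorem IsRiordanPath.isBlockMin_pathPartition_iff (hw : IsRiordanPath m w) (x : Fin m) :
    IsBlockMin (pathPartition m w) x ↔ w x = 0 := by
  rw [← hw.opener_eq_self_iff x.isLt]
  constructor
  · intro hmin
    have := hmin ⟨opener w x, (opener_le w x).trans_lt x.isLt⟩
      (by rw [mem_part_pathPartition, hw.opener_opener x.isLt])
    exact le_antisymm (opener_le w x) this
  · intro hx y hy
    rw [mem_part_pathPartition] at hy
    show (x : ℕ) ≤ y
    rw [← hx, hy]
    exact opener_le w y

theorem IsRiordanPath.isBlockMax_pathPartition_iff (hw : IsRiordanPath m w) (x : Fin m) :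
    IsBlockMax (pathPartition m w) x ↔ w x = 2 := by
  constructor
  · intro hmax
    have hk : opener w x < m := (opener_le w x).trans_lt x.isLt
    obtain ⟨c, -, hcm, hwc, hc⟩ := hw.exists_closer hk (hw.step_opener x.isLt)
    have hcx : c ≤ x := hmax ⟨c, hcm⟩ (by rw [mem_part_pathPartition, hc])
    have hxc := hw.le_of_opener_eq hcm x.isLt hwc hc.symm
    rwa [le_antisymm hcx hxc] at hwc
  · intro hx y hy
    rw [mem_part_pathPartition] at hy
    exact hw.le_of_opener_eq x.isLt y.isLt hx hy.symm

theorem IsRiordanPath.stepType_pathPartition (hw : IsRiordanPath m w) (x : Fin m) :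
    stepType (pathPartition m w) x = w x := by
  have := hw.step_le_two x x.isLt
  simp only [stepType, hw.isBlockMin_pathPartition_iff, hw.isBlockMax_pathPartition_iff]
  split_ifs <;> omega

theorem openBlocks_subset_of_mem_part (hNC : IsNoncrossing P) {a c : Fin m} (hac : a < c)
    (ha : a ∈ P.part c) : openBlocks P a ⊆ openBlocks P c := by
  intro b hb
  simp only [openBlocks, mem_filter] at hb ⊢
  obtain ⟨hbP, ⟨y, hy, hya⟩, ⟨z, hz, haz⟩⟩ := hb
  have hcP := P.part_mem.2 (mem_univ c)
  refine ⟨hbP, ⟨y, hy, hya.trans hac⟩, ?_⟩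
  by_cases hbc : b = P.part c
  · exact ⟨c, hbc ▸ P.mem_part (mem_univ c), le_rfl⟩
  have hza : a < z := lt_of_le_of_ne haz fun h => hbc (P.eq_of_mem_parts hbP hcP (h ▸ hz) ha)
  refine ⟨z, hz, le_of_not_gt fun hzc => hNC ?_⟩
  exact ⟨y, a, z, c, hya, hza, hzc, b, hbP, P.part c, hcP, hbc, hy, hz, ha,
    P.mem_part (mem_univ c)⟩

theorem openBlocks_subset_of_mem_part_of_lt_of_le (hNC : IsNoncrossing P) {a c : Fin m}
    {i : ℕ} (hai : (a : ℕ) < i) (hic : i ≤ c) (ha : a ∈ P.part c) :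
    openBlocks P c ⊆ openBlocks P i := by
  intro b hb
  simp only [openBlocks, mem_filter] at hb ⊢
  obtain ⟨hbP, ⟨y, hy, hyc⟩, ⟨z, hz, hcz⟩⟩ := hb
  have hcP := P.part_mem.2 (mem_univ c)
  refine ⟨hbP, ?_, ⟨z, hz, hic.trans hcz⟩⟩
  by_cases hbc : b = P.part c
  · exact ⟨a, hbc ▸ ha, hai⟩
  have hzc : c < z :=
    lt_of_le_of_ne hcz fun h => hbc (P.eq_of_mem_parts hbP hcP (h.symm ▸ hz : c ∈ b)
      (P.mem_part (mem_univ c)))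
  refine ⟨y, hy, lt_of_not_ge fun hiy => hNC ?_⟩
  exact ⟨a, y, c, z, show (a : ℕ) < y by omega, hyc, hzc, P.part c, hcP, b, hbP, Ne.symm hbc,
    ha, P.mem_part (mem_univ c), hy, hz⟩

theorem opener_partitionPath (hNC : IsNoncrossing P) (hP : NoSingletons P) (x : Fin m) :
    opener (partitionPath P) x = (P.part x).min' ⟨x, P.mem_part (mem_univ x)⟩ := by
  set a := (P.part x).min' ⟨x, P.mem_part (mem_univ x)⟩
  have ha : a ∈ P.part x := min'_mem _ _
  have hmin : ∀ y ∈ P.part x, a ≤ y := fun y hy => min'_le _ y hy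
  rcases (hmin x (P.mem_part (mem_univ x))).eq_or_lt with hax | hax
  · have hxmin : IsBlockMin P x := hax ▸ hmin
    rw [← hax]
    apply opener_eq_self_of_step_eq_zero
    simp [partitionPath_of_lt P x.isLt, stepType, hxmin, not_isBlockMax_of_isBlockMin hP hxmin,
      hax]
  have hxmin : ¬IsBlockMin P x := fun h => (h a ha).not_gt hax
  have hstep : 1 ≤ partitionPath P x := by
    rw [partitionPath_of_lt P x.isLt, stepType, if_neg hxmin]
    omega
  have hblock : blockHeight (partitionPath P) x = height (partitionPath P) x :=
    max_eq_left (by rw [height_succ]; omega)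
  have hx := (part_mem_openBlocks_iff P x).2 hxmin
  have ha' : P.part x ∉ openBlocks P a := fun h => by
    obtain ⟨-, ⟨y, hy, hya⟩, -⟩ := mem_filter.1 h
    exact (hmin y hy).not_gt hya
  refine opener_eq_of_height (Fin.le_def.1 hax.le) ?_ fun i hai hix => ?_ <;>
    rw [hblock, height_partitionPath P x.isLt.le]
  · rw [height_partitionPath P a.isLt.le, Nat.cast_lt]
    exact card_lt_card <|
      (ssubset_iff_of_subset (openBlocks_subset_of_mem_part hNC hax ha)).2 ⟨_, hx, ha'⟩
  · rw [height_partitionPath P (hix.trans x.isLt.le), Nat.cast_le]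
    exact card_le_card (openBlocks_subset_of_mem_part_of_lt_of_le hNC hai hix ha)

theorem pathPartition_partitionPath (hNC : IsNoncrossing P) (hP : NoSingletons P) :
    pathPartition m (partitionPath P) = P := by
  refine Finpartition.eq_of_part_eq fun x _ => ?_
  ext y
  rw [mem_part_pathPartition, opener_partitionPath hNC hP, opener_partitionPath hNC hP,
    Fin.val_inj]
  constructor
  · intro h
    have hy := min'_mem (P.part y) ⟨y, P.mem_part (mem_univ y)⟩
    rw [← h] at hy
    rw [P.eq_of_mem_parts (P.part_mem.2 (mem_univ x)) (P.part_mem.2 (mem_univ y))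
      (min'_mem _ _) hy]
    exact P.mem_part (mem_univ y)
  · intro hy
    have : P.part y = P.part x := P.part_eq_of_mem (P.part_mem.2 (mem_univ x)) hy
    simp only [this]

end PartitionPath

/-- Position `0` stands for the first factor `I(f)`, which always opens a block. -/
def patternPath {m : ℕ} (s : Fin (m - 1) → ℕ) : ℕ → ℕ
  | 0 => 0
  | n + 1 => if h : n < m - 1 then s ⟨n, h⟩ else 0

theorem patternPath_succ (s : Fin (m - 1) → ℕ) (i : Fin (m - 1)) :
    patternPath s (i + 1) = s i :=
  dif_pos i.isLt

theorem sum_range_patternPath (s : Fin (m - 1) → ℕ) {k : ℕ} (hk : k ≤ m - 1) :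
    ∑ j ∈ range (k + 1), patternPath s j =
      ∑ i ∈ univ.filter (fun i : Fin (m - 1) => (i : ℕ) < k), s i := by
  have hrange : (range (m - 1)).filter (· < k) = range k := by
    ext j
    simp only [mem_filter, mem_range]
    omega
  simp_rw [← patternPath_succ s]
  rw [sum_range_succ', sum_filter, ← add_zero (∑ i : Fin (m - 1), _),
    Fin.sum_univ_eq_sum_range (fun j => if j < k then patternPath s (j + 1) else 0),
    ← sum_filter, hrange]
  rfl

theorem height_patternPath_succ (s : Fin (m - 1) → ℕ) {k : ℕ} (hk : k ≤ m - 1) :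
    height (patternPath s) (k + 1) =
      k + 1 - ((∑ i ∈ univ.filter (fun i : Fin (m - 1) => (i : ℕ) < k), s i : ℕ) : ℤ) := by
  rw [height, ← sum_range_patternPath s hk]
  push_cast
  ring

theorem height_patternPath_length (s : Fin (m - 1) → ℕ) :
    height (patternPath s) m = m - ((∑ i, s i : ℕ) : ℤ) := by
  rcases Nat.eq_zero_or_pos m with rfl | hm
  · simp
  · have hend := height_patternPath_succ s le_rfl
    rw [Nat.sub_add_cancel hm, filter_true_of_mem fun j _ => j.isLt] at hend
    omega

theorem isRiordanPath_patternPath_iff (s : Fin (m - 1) → ℕ) :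
    IsRiordanPath m (patternPath s) ↔ memD 2 m s := by
  have hlt : ∀ i : Fin (m - 1), univ.filter (fun j => j < i) =
      univ.filter (fun j : Fin (m - 1) => (j : ℕ) < i) := fun i => by simp only [Fin.lt_def]
  have hlength := height_patternPath_length s
  constructor
  · intro hw
    refine ⟨⟨⟨fun i => ?_, fun i => ?_⟩, ?_⟩, fun i => ?_⟩
    · simpa [patternPath_succ] using hw.step_le_two (i + 1) (by omega)
    · have := hw.step_le_height (i + 1) (by omega)
      rw [patternPath_succ, height_patternPath_succ s i.isLt.le] at this
      rw [hlt]
      omega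
    · have := hw.height_length
      omega
    · have := hw.step_le_two (i + 1) (by omega)
      rw [patternPath_succ] at this
      omega
  · rintro ⟨⟨⟨hle, hadm⟩, htot⟩, -⟩
    refine ⟨fun k hk => ?_, fun k hk => ?_, ?_⟩
    · cases k with
      | zero => exact Nat.zero_le _
      | succ k => exact (patternPath_succ s ⟨k, by omega⟩) ▸ hle _
    · cases k with
      | zero => simp [patternPath]
      | succ k =>
        have := hadm ⟨k, by omega⟩
        rw [hlt] at this
        dsimp only at this
        rw [patternPath_succ s ⟨k, by omega⟩, height_patternPath_succ s (by omega)]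
        omega
    · rw [hlength]
      omega

theorem patternPath_partitionPath {P : Finpartition (univ : Finset (Fin m))}
    (hP : NoSingletons P) :
    patternPath (m := m) (fun i => partitionPath P (i + 1)) = partitionPath P := by
  funext n
  cases n with
  | zero =>
    rcases Nat.eq_zero_or_pos m with rfl | hm
    · rfl
    · exact ((isRiordanPath_partitionPath hP).step_zero hm).symm
  | succ n =>
    simp only [patternPath]
    split_ifs with h
    · rfl
    · rw [partitionPath, dif_neg (by omega)]

noncomputable def patternEquiv (m : ℕ) :
    {s : Fin (m - 1) → ℕ // memD 2 m s} ≃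
      {P : Finpartition (univ : Finset (Fin m)) // IsNoncrossing P ∧ NoSingletons P} where
  toFun s :=
    have hw := (isRiordanPath_patternPath_iff s.1).2 s.2
    ⟨pathPartition m (patternPath s.1), hw.isNoncrossing_pathPartition,
      hw.noSingletons_pathPartition⟩
  invFun P := ⟨fun i => partitionPath P.1 (i + 1), (isRiordanPath_patternPath_iff _).1 <|
    (patternPath_partitionPath P.2.2).symm ▸ isRiordanPath_partitionPath P.2.2⟩
  left_inv s := Subtype.ext <| funext fun i => by
    show partitionPath (pathPartition m (patternPath s.1)) (i + 1) = s.1 i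
    rw [partitionPath_of_lt _ (by omega),
      ((isRiordanPath_patternPath_iff s.1).2 s.2).stepType_pathPartition]
    exact patternPath_succ s.1 i
  right_inv P := Subtype.ext <| by
    simp only
    rw [patternPath_partitionPath P.2.2, pathPartition_partitionPath P.2.1 P.2.2]

end Riordan

theorem card_D_eq_riordan_general (q m : ℕ) (hq : 2 ≤ q) (hqe : Even q) :
    Nat.card {r : Fin (m - 1) → ℕ // memD q m r} = riordan m := by
  obtain ⟨p, rfl⟩ := hqe
  rw [← two_mul, Riordan.card_memD_two_mul (by omega) m]
  exact Nat.card_congr (Riordan.patternEquiv m)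

/-- for every even `q ≥ 2` and `m ≥ 2`, the cardinality of `D_m` equals
the Riordan number `R_m`; in particular it does not depend on `q`. -/
theorem card_D_eq_riordan (q m : ℕ) (hq : 2 ≤ q) (hqe : Even q) (hm : 2 ≤ m) :
    Nat.card {r : Fin (m - 1) → ℕ // memD q m r} = riordan m :=
  card_D_eq_riordan_general q m hq hqe
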